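/- arXiv:1504.03380 — 5 statements merged into one kernel-verified Lean document; each statement's English description precedes it below -/
import Mathlib

section
/- In the plane ℝ², set B₁ = {p | p.1 > 0}, B₂ = {p | p.2 > 0}, C = {p | p.1 < 0 ∧ p.2 < 0}, and A = interior(ℝ² ∖ C). Then: (i) A = B₁ ∪ B₂; (ii) interior((ℝ² ∖ A) ∪ (B₁ ∪ B₂)) = ℝ²; (iii) interior((ℝ² ∖ A) ∪ B₁) = {p | p.1 > 0 ∨ p.2 < 0}; (iv) interior((ℝ² ∖ A) ∪ B₂) = {p | p.1 < 0 ∨ p.2 > 0}; consequently interior((ℝ² ∖ A) ∪ B₁) ∪ interior((ℝ² ∖ A) ∪ B₂) = ℝ² ∖ {(0,0)} ≠ ℝ². (This refutes the Kreisel–Putnam principle in the Tarski topological model over ℝ², where implication is interpreted by S → T ↦ interior((X ∖ S) ∪ T).) -/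
/-! Since `closure C = {x ≤ 0, y ≤ 0}`, the set `A = (closure C)ᶜ` is the union of the two open
half-planes. Then `Aᶜ ∪ B₁` is the complement of the quadrant `{x ≤ 0 < y}`, whose closure adds the
ray `{x ≤ 0, y = 0}`; symmetrically for `B₂`. Both rays contain the origin, so `(A → B₁) ∨ (A → B₂)`
fails there although `A → B₁ ∨ B₂` holds everywhere. -/

open Set

theorem interior_compl_Iio_prod_Iio {α β : Type*}
    [TopologicalSpace α] [LinearOrder α] [OrderTopology α] [DenselyOrdered α] [NoMinOrder α]
    [TopologicalSpace β] [LinearOrder β] [OrderTopology β] [DenselyOrdered β] [NoMinOrder β]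
    (a : α) (b : β) :
    interior (Iio a ×ˢ Iio b)ᶜ = {p | a < p.1 ∨ b < p.2} := by
  rw [interior_compl, closure_prod_eq, closure_Iio, closure_Iio]
  ext p
  simp only [mem_compl_iff, mem_prod, mem_Iic, not_and_or, not_le, mem_ofPred_eq]

theorem interior_compl_setOf_or_union_fst {α β : Type*}
    [TopologicalSpace α] [LinearOrder α] [ClosedIicTopology α]
    [TopologicalSpace β] [LinearOrder β] [OrderTopology β] [DenselyOrdered β] [NoMaxOrder β]
    (a : α) (b : β) :
    interior ({p : α × β | a < p.1 ∨ b < p.2}ᶜ ∪ {p | a < p.1}) = {p | a < p.1 ∨ p.2 < b} := by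
  have h : {p : α × β | a < p.1 ∨ b < p.2}ᶜ ∪ {p | a < p.1} = (Iic a ×ˢ Ioi b)ᶜ := by
    ext p
    simp only [mem_union, mem_compl_iff, mem_ofPred_eq, mem_prod, mem_Iic, mem_Ioi]
    by_cases a < p.1 <;> by_cases b < p.2 <;> simp_all
  rw [h, interior_compl, closure_prod_eq, closure_Iic, closure_Ioi]
  ext p
  simp only [mem_compl_iff, mem_prod, mem_Iic, mem_Ici, not_and_or, not_le, mem_ofPred_eq]

theorem interior_compl_setOf_or_union_snd {α β : Type*}
    [TopologicalSpace α] [LinearOrder α] [OrderTopology α] [DenselyOrdered α] [NoMaxOrder α]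
    [TopologicalSpace β] [LinearOrder β] [ClosedIicTopology β]
    (a : α) (b : β) :
    interior ({p : α × β | a < p.1 ∨ b < p.2}ᶜ ∪ {p | b < p.2}) = {p | p.1 < a ∨ b < p.2} := by
  have h : {p : α × β | a < p.1 ∨ b < p.2}ᶜ ∪ {p | b < p.2} = (Ioi a ×ˢ Iic b)ᶜ := by
    ext p
    simp only [mem_union, mem_compl_iff, mem_ofPred_eq, mem_prod, mem_Iic, mem_Ioi]
    by_cases a < p.1 <;> by_cases b < p.2 <;> simp_all
  rw [h, interior_compl, closure_prod_eq, closure_Iic, closure_Ioi]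
  ext p
  simp only [mem_compl_iff, mem_prod, mem_Iic, mem_Ici, not_and_or, not_le, mem_ofPred_eq]

theorem setOf_or_union_setOf_or_eq_compl_singleton {α β : Type*} [LinearOrder α] [LinearOrder β]
    (a : α) (b : β) :
    {p : α × β | a < p.1 ∨ p.2 < b} ∪ {p | p.1 < a ∨ b < p.2} = {(a, b)}ᶜ := by
  ext ⟨x, y⟩
  simp only [mem_union, mem_ofPred_eq, mem_compl_iff, mem_singleton_iff, Prod.mk.injEq]
  constructor
  · rintro (h | h) ⟨rfl, rfl⟩ <;> simp at h
  · intro h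
    rcases lt_trichotomy x a with hx | rfl | hx
    · exact Or.inr (Or.inl hx)
    · rcases lt_or_gt_of_ne (fun hy => h ⟨rfl, hy⟩) with hy | hy
      exacts [Or.inl (Or.inr hy), Or.inr (Or.inr hy)]
    · exact Or.inl (Or.inl hx)

/-- Refutation of the Kreisel–Putnam principle in the Tarski topological model
over ℝ². -/
theorem stmt_5 (B₁ B₂ C A : Set (ℝ × ℝ))
    (hB₁ : B₁ = {p | 0 < p.1}) (hB₂ : B₂ = {p | 0 < p.2})
    (hC : C = {p | p.1 < 0 ∧ p.2 < 0}) (hA : A = interior Cᶜ) :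
    A = B₁ ∪ B₂ ∧
    interior (Aᶜ ∪ (B₁ ∪ B₂)) = Set.univ ∧
    interior (Aᶜ ∪ B₁) = {p | 0 < p.1 ∨ p.2 < 0} ∧
    interior (Aᶜ ∪ B₂) = {p | p.1 < 0 ∨ 0 < p.2} ∧
    interior (Aᶜ ∪ B₁) ∪ interior (Aᶜ ∪ B₂) = ({((0 : ℝ), (0 : ℝ))}ᶜ : Set (ℝ × ℝ)) ∧
    ({((0 : ℝ), (0 : ℝ))}ᶜ : Set (ℝ × ℝ)) ≠ Set.univ := by
  have hA_setOf : A = {p | 0 < p.1 ∨ 0 < p.2} := hA.trans (hC ▸ interior_compl_Iio_prod_Iio 0 0)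
  have h₁ : interior (Aᶜ ∪ B₁) = {p | 0 < p.1 ∨ p.2 < 0} := by
    rw [hA_setOf, hB₁, interior_compl_setOf_or_union_fst]
  have h₂ : interior (Aᶜ ∪ B₂) = {p | p.1 < 0 ∨ 0 < p.2} := by
    rw [hA_setOf, hB₂, interior_compl_setOf_or_union_snd]
  have hA_union : A = B₁ ∪ B₂ := by rw [hA_setOf, hB₁, hB₂]; rfl
  refine ⟨hA_union, ?_, h₁, h₂, ?_, compl_ne_univ.mpr (singleton_nonempty _)⟩
  · rw [← hA_union, compl_union_self, interior_univ]
  · rw [h₁, h₂, setOf_or_union_setOf_or_eq_compl_singleton]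
end

section
/- In ℝ, interior(⋂_{n ≥ 1} ((ℝ ∖ {0}) ∪ Ioo(−1/n, 1/n))) = ℝ, whereas (ℝ ∖ {0}) ∪ interior(⋂_{n ≥ 1} Ioo(−1/n, 1/n)) = ℝ ∖ {0}. (This refutes the Constant Domain Principle ∀x(α ∨ π(x)) → α ∨ ∀x π(x) in the Tarski topological model over ℝ with domain ℕ, where the universal quantifier is interpreted as the interior of the intersection and disjunction as union.) -/
/-- Refutation of the Constant Domain Principle in the Tarski topological model
over ℝ with domain ℕ. -/
theorem stmt_6 :
    interior (⋂ n : ℕ, ⋂ (_ : 1 ≤ n),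
        (({0}ᶜ : Set ℝ) ∪ Set.Ioo (-(1 / (n : ℝ))) (1 / (n : ℝ)))) = Set.univ ∧
    (({0}ᶜ : Set ℝ) ∪ interior (⋂ n : ℕ, ⋂ (_ : 1 ≤ n),
        Set.Ioo (-(1 / (n : ℝ))) (1 / (n : ℝ)))) = ({0}ᶜ : Set ℝ) := by
  constructor
  · have h : (⋂ n : ℕ, ⋂ (_ : 1 ≤ n),
        (({0}ᶜ : Set ℝ) ∪ Set.Ioo (-(1 / (n : ℝ))) (1 / (n : ℝ)))) = Set.univ := by
      ext x
      simp only [Set.mem_iInter, Set.mem_univ, iff_true]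
      intro n hn
      by_cases hx : x = 0
      · right
        have hpos : (0:ℝ) < 1 / (n:ℝ) := by positivity
        subst hx
        exact ⟨by linarith, hpos⟩
      · left; exact hx
    rw [h, interior_univ]
  · have h : (⋂ n : ℕ, ⋂ (_ : 1 ≤ n),
        Set.Ioo (-(1 / (n : ℝ))) (1 / (n : ℝ))) = {0} := by
      ext x
      simp only [Set.mem_iInter, Set.mem_singleton_iff, Set.mem_Ioo]
      constructor
      · intro hx
        by_contra hne
        have habs : 0 < |x| := abs_pos.mpr hne
        obtain ⟨n, hn⟩ := exists_nat_one_div_lt habs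
        have h1 : 1 ≤ n + 1 := Nat.le_add_left 1 n
        have := hx (n+1) h1
        have : |x| < 1 / ((n:ℝ)+1) := abs_lt.mpr (by push_cast at this ⊢; constructor <;> linarith [this.1, this.2])
        linarith
      · rintro rfl n hn
        have hpos : (0:ℝ) < 1 / (n:ℝ) := by positivity
        exact ⟨by linarith, hpos⟩
    rw [h]
    have : interior ({0} : Set ℝ) = ∅ := by
      exact interior_singleton 0
    rw [this, Set.union_empty]
end

section
/- Let f be a polynomial with complex coefficients of degree at least 1, let z₀ ∈ ℂ and b = f(z₀). Then the following are equivalent: (i) there exist an open neighborhood U of b in ℂ and a continuous map s : U → ℂ with s(b) = z₀ and f(s(w)) = w for all w ∈ U; (ii) the derivative of f does not vanish at z₀ (equivalently, z₀ is a simple root of the polynomial f − b). In other words, the stable solutions of the equation f(z) = b are exactly the non-repeated roots of f − b. -/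
/-!
If `f'(z₀) ≠ 0`, the inverse function theorem provides the local section. If `f'(z₀) = 0`, then
`z₀` is a root of `f - b` of some multiplicity `m ≥ 2`, so near `z₀` we can write
`f(z) - b = ψ(z) ^ m` with `ψ` continuous (a branch of the `m`-th root of the nonvanishing
cofactor exists near `z₀`). A continuous section `s` would make `w ↦ ψ(s(w))` a continuous
`m`-th root of `w - b` on a small circle around `b`, which is impossible: dividing it by
`exp(iθ/m)` along the circle gives a continuous map into the finite set of `m`-th roots of the
radius, hence a constant one, which forces `exp(2πi/m) = 1`.
-/

open Polynomial Complex Metric Filter Topology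
open scoped Real

/-- `x` is a *stable solution* of `f z = f x`. -/
def HasContinuousLocalSectionAt {X Y : Type*} [TopologicalSpace X] [TopologicalSpace Y]
    (f : X → Y) (x : X) : Prop :=
  ∃ U : Set Y, IsOpen U ∧ f x ∈ U ∧ ∃ s : Y → X, ContinuousOn s U ∧ s (f x) = x ∧
    ∀ y ∈ U, f (s y) = y

theorem HasStrictFDerivAt.hasContinuousLocalSectionAt {𝕜 E F : Type*}
    [NontriviallyNormedField 𝕜] [NormedAddCommGroup E] [NormedSpace 𝕜 E] [CompleteSpace E]
    [NormedAddCommGroup F] [NormedSpace 𝕜 F] {f : E → F} {f' : E ≃L[𝕜] F} {a : E}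
    (hf : HasStrictFDerivAt f (f' : E →L[𝕜] F) a) : HasContinuousLocalSectionAt f a := by
  set e := hf.toOpenPartialHomeomorph f
  have he : ∀ x, e x = f x := fun x => congrFun hf.toOpenPartialHomeomorph_coe x
  refine ⟨e.target, e.open_target, hf.image_mem_toOpenPartialHomeomorph_target, e.symm,
    e.continuousOn_symm, ?_, fun y hy => ?_⟩
  · simpa only [he] using e.left_inv hf.mem_toOpenPartialHomeomorph_source
  · simpa only [he] using e.right_inv hy

theorem Polynomial.rootMultiplicity_eq_one_iff {R : Type*} [CommRing R] {p : R[X]} {a : R}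
    (h : p.IsRoot a) : p.rootMultiplicity a = 1 ↔ ¬ p.derivative.IsRoot a := by
  rcases eq_or_ne p 0 with rfl | hp
  · simp
  have hpos : 0 < p.rootMultiplicity a := (rootMultiplicity_pos hp).2 h
  have hlt := one_lt_rootMultiplicity_iff_isRoot hp (t := a)
  rw [and_iff_right h] at hlt
  rw [← hlt]
  omega

theorem exists_continuousOn_pow_eq {X : Type*} [TopologicalSpace X] {g : X → ℂ}
    (hg : Continuous g) {x₀ : X} (hx₀ : g x₀ ≠ 0) {m : ℕ} (hm : m ≠ 0) :
    ∃ W ∈ 𝓝 x₀, ∃ φ : X → ℂ, ContinuousOn φ W ∧ ∀ x ∈ W, φ x ^ m = g x := by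
  -- dividing by `c` keeps `g x / c` near `1`, where the principal branch of `(·) ^ (1/m)` is
  -- continuous
  set c := g x₀
  have hgc : Continuous fun x => g x / c := hg.div_const c
  refine ⟨(fun x => g x / c) ⁻¹' slitPlane, ?_, fun x => c ^ (m⁻¹ : ℂ) * (g x / c) ^ (m⁻¹ : ℂ),
    fun x hx => ?_, fun x _ => ?_⟩
  · exact (isOpen_slitPlane.preimage hgc).mem_nhds (by simp [c, div_self hx₀])
  · exact (continuousAt_const.mul
      (hgc.continuousAt.cpow continuousAt_const hx)).continuousWithinAt
  · rw [mul_pow, cpow_nat_inv_pow _ hm, cpow_nat_inv_pow _ hm, mul_div_cancel₀ _ hx₀]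

theorem Polynomial.exists_pow_eq_eval_of_isRoot_derivative {p : ℂ[X]} {z₀ : ℂ}
    (h : p.IsRoot z₀) (h' : p.derivative.IsRoot z₀) :
    ∃ m, 2 ≤ m ∧ ∃ W ∈ 𝓝 z₀, ∃ ψ : ℂ → ℂ, ContinuousOn ψ W ∧ ∀ z ∈ W, ψ z ^ m = p.eval z := by
  rcases eq_or_ne p 0 with rfl | hp
  · exact ⟨2, le_rfl, Set.univ, univ_mem, 0, continuousOn_const, by simp⟩
  set m := p.rootMultiplicity z₀
  have hm : 1 < m := (one_lt_rootMultiplicity_iff_isRoot hp).2 ⟨h, h'⟩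
  set q := p /ₘ (X - C z₀) ^ m
  have hfactor : ∀ z, p.eval z = (z - z₀) ^ m * q.eval z := fun z => by
    simpa using congrArg (eval z) (pow_mul_divByMonic_rootMultiplicity_eq p z₀).symm
  obtain ⟨W, hW, φ, hφ, hφm⟩ := exists_continuousOn_pow_eq q.continuous
    (eval_divByMonic_pow_rootMultiplicity_ne_zero z₀ hp) (by omega : m ≠ 0)
  refine ⟨m, hm, W, hW, fun z => (z - z₀) * φ z, (continuousOn_id.sub continuousOn_const).mul hφ,
    fun z hz => ?_⟩
  rw [mul_pow, hφm z hz, hfactor]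

theorem not_forall_pow_eq_sub_of_continuousOn_sphere {m : ℕ} (hm : 2 ≤ m) {c : ℂ} {r : ℝ}
    (hr : 0 < r) {g : ℂ → ℂ} (hg : ContinuousOn g (sphere c r)) :
    ¬ ∀ w ∈ sphere c r, g w ^ m = w - c := by
  intro hgm
  have hm0 : (m : ℂ) ≠ 0 := by norm_cast; omega
  set γ : ℝ → ℂ := fun θ => c + r * exp (θ * I)
  have hγ : ∀ θ, γ θ ∈ sphere c r := fun θ => by
    simp [γ, norm_exp_ofReal_mul_I, abs_of_pos hr]
  have hγcont : Continuous γ := by fun_prop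
  set u : ℝ → ℂ := fun θ => g (γ θ) / exp (θ * I / m)
  have hu : ∀ θ, u θ ^ m = r := fun θ => by
    rw [div_pow, hgm _ (hγ θ), ← exp_nat_mul, mul_div_cancel₀ _ hm0]
    simp [γ, exp_ne_zero]
  have hucont : Continuous u :=
    ((hg.comp_continuous hγcont hγ).div (by fun_prop)) fun θ => exp_ne_zero _
  have hroots : {z : ℂ | z ^ m = r}.Finite :=
    (nthRoots m (r : ℂ)).toFinset.finite_toSet.subset fun z hz => by
      simpa [mem_nthRoots (by omega : 0 < m)] using hz
  have hconst : u 0 = u (2 * π) :=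
    isPreconnected_univ.constant_of_mapsTo hroots.isDiscrete hucont.continuousOn
      (fun θ _ => hu θ) (Set.mem_univ _) (Set.mem_univ _)
  have hloop : γ (2 * π) = γ 0 := by simp [γ]
  have hg0 : g (γ 0) ≠ 0 := fun h0 => by
    have hr0 := hgm _ (hγ 0)
    rw [h0, zero_pow (by omega)] at hr0
    simp only [γ, ofReal_zero, zero_mul, exp_zero, mul_one, add_sub_cancel_left] at hr0
    exact hr.ne' (mod_cast hr0.symm)
  have hζ : exp (2 * π * I / m) = 1 := by
    simp only [u, hloop, ofReal_zero, zero_mul, zero_div, exp_zero, div_one] at hconst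
    push_cast at hconst
    rwa [eq_div_iff (exp_ne_zero _), mul_eq_left₀ hg0] at hconst
  exact (isPrimitiveRoot_exp m (by omega)).ne_one hm hζ

theorem not_hasContinuousLocalSectionAt_of_pow_eq_sub {F : ℂ → ℂ} {z₀ : ℂ} {m : ℕ}
    (hm : 2 ≤ m) {W : Set ℂ} (hW : W ∈ 𝓝 z₀) {ψ : ℂ → ℂ} (hψ : ContinuousOn ψ W)
    (hF : ∀ z ∈ W, ψ z ^ m = F z - F z₀) : ¬ HasContinuousLocalSectionAt F z₀ := by
  rintro ⟨U, hU, hbU, s, hs, hsb, hsF⟩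
  have hV : U ∩ s ⁻¹' W ∈ 𝓝 (F z₀) := inter_mem (hU.mem_nhds hbU)
    ((hs.continuousAt (hU.mem_nhds hbU)).preimage_mem_nhds (by rwa [hsb]))
  obtain ⟨ε, hε, hball⟩ := Metric.mem_nhds_iff.1 hV
  have hsphere : sphere (F z₀) (ε / 2) ⊆ U ∩ s ⁻¹' W :=
    (sphere_subset_ball (by linarith)).trans hball
  refine not_forall_pow_eq_sub_of_continuousOn_sphere hm (half_pos hε)
    ((hψ.comp (hs.mono fun w hw => (hsphere hw).1) fun w hw => (hsphere hw).2)) fun w hw => ?_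
  simp only [Function.comp_apply, hF _ (hsphere hw).2, hsF _ (hsphere hw).1]

theorem stmt_7_general (f : Polynomial ℂ) (z₀ b : ℂ)
    (hb : f.eval z₀ = b) :
    ((∃ (U : Set ℂ), IsOpen U ∧ b ∈ U ∧ ∃ s : ℂ → ℂ, ContinuousOn s U ∧ s b = z₀ ∧
        ∀ w ∈ U, f.eval (s w) = w) ↔ f.derivative.eval z₀ ≠ 0) ∧
    (f.derivative.eval z₀ ≠ 0 ↔ (f - Polynomial.C b).rootMultiplicity z₀ = 1) := by
  subst hb
  have hroot : (f - C (f.eval z₀)).IsRoot z₀ := by simp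
  have hderiv : derivative (f - C (f.eval z₀)) = derivative f := by simp
  refine ⟨⟨fun hsection hd => ?_, fun hd => ?_⟩, ?_⟩
  · obtain ⟨m, hm, W, hW, ψ, hψ, hψm⟩ :=
      exists_pow_eq_eval_of_isRoot_derivative hroot (by simpa [hderiv] using hd)
    exact not_hasContinuousLocalSectionAt_of_pow_eq_sub (F := fun z => f.eval z) hm hW hψ
      (by simpa using hψm) hsection
  · exact ((f.hasStrictDerivAt z₀).hasStrictFDerivAt_equiv hd).hasContinuousLocalSectionAt
  · rw [rootMultiplicity_eq_one_iff hroot, hderiv]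
    rfl

/-- The stable solutions of the polynomial equation `f(z) = b` over ℂ are exactly
the non-repeated roots of `f - b`: a continuous local section of `f` through `z₀`
over a neighborhood of `b` exists iff the derivative of `f` does not vanish at
`z₀`, equivalently iff `z₀` is a simple root of `f - b`. -/
theorem stmt_7 (f : Polynomial ℂ) (hf : 1 ≤ f.natDegree) (z₀ b : ℂ)
    (hb : f.eval z₀ = b) :
    ((∃ (U : Set ℂ), IsOpen U ∧ b ∈ U ∧ ∃ s : ℂ → ℂ, ContinuousOn s U ∧ s b = z₀ ∧
        ∀ w ∈ U, f.eval (s w) = w) ↔ f.derivative.eval z₀ ≠ 0) ∧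
    (f.derivative.eval z₀ ≠ 0 ↔ (f - Polynomial.C b).rootMultiplicity z₀ = 1) :=
  stmt_7_general f z₀ b hb
end

section
/- There exists a sequence (F_n)_{n ∈ ℕ} of sheaves of types on the real line ℝ such that for every n and every point x ∈ ℝ the stalk (F_n)_x is nonempty, while for every nonempty open set U ⊆ ℝ there exists n with F_n(U) empty. Consequently, the objectwise product presheaf ∏_n F_n (given by U ↦ ∏_n F_n(U)) has empty sections over every nonempty open set, hence empty stalk at every point. -/
open TopologicalSpace

/-- A presheaf of types on a topological space `B`. -/
structure Psh (B : Type) [TopologicalSpace B] where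
  obj : Opens B → Type
  res : ∀ {U V : Opens B}, V ≤ U → obj U → obj V
  res_id : ∀ (U : Opens B) (x : obj U), res le_rfl x = x
  res_comp : ∀ {U V W : Opens B} (hWV : W ≤ V) (hVU : V ≤ U) (x : obj U),
    res hWV (res hVU x) = res (hWV.trans hVU) x

namespace Psh

variable {B : Type} [TopologicalSpace B]

/-- The sheaf conditions: separation and gluing for arbitrary open covers. -/
def IsSheaf (F : Psh B) : Prop :=
  ∀ {ι : Type} (U : Opens B) (V : ι → Opens B) (hV : ∀ i, V i ≤ U),
    (∀ x ∈ U, ∃ i, x ∈ V i) →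
    (∀ s t : F.obj U, (∀ i, F.res (hV i) s = F.res (hV i) t) → s = t) ∧
    ∀ sf : ∀ i, F.obj (V i),
      (∀ i j, F.res (inf_le_left : V i ⊓ V j ≤ V i) (sf i)
            = F.res (inf_le_right : V i ⊓ V j ≤ V j) (sf j)) →
      ∃ s : F.obj U, ∀ i, F.res (hV i) s = sf i

/-- The support of a presheaf: the union of all open sets with nonempty sections. -/
def supp (F : Psh B) : Set B := {b | ∃ U : Opens B, b ∈ U ∧ Nonempty (F.obj U)}

/-- The germ relation at a point. -/
def stalkRel (F : Psh B) (b : B) :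
    (Σ U : {U : Opens B // b ∈ U}, F.obj U.1) →
      (Σ U : {U : Opens B // b ∈ U}, F.obj U.1) → Prop :=
  fun x y => ∃ (W : Opens B) (_ : b ∈ W) (h1 : W ≤ x.1.1) (h2 : W ≤ y.1.1),
    F.res h1 x.2 = F.res h2 y.2

/-- The stalk of a presheaf at a point: the set of germs, i.e. the colimit of
sections over open neighborhoods of the point. -/
def stalk (F : Psh B) (b : B) : Type := Quot (F.stalkRel b)

/-- The germ of a section at a point. -/
def germ (F : Psh B) {b : B} {U : Opens B} (hb : b ∈ U) (s : F.obj U) : F.stalk b :=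
  Quot.mk _ ⟨⟨U, hb⟩, s⟩

/-- A morphism of presheaves `F|_U → G|_U` (restricted to opens contained in `U`). -/
structure Hom (F G : Psh B) (U : Opens B) where
  app : ∀ (V : Opens B), V ≤ U → F.obj V → G.obj V
  natural : ∀ {V W : Opens B} (hVU : V ≤ U) (hWV : W ≤ V) (s : F.obj V),
    G.res hWV (app V hVU s) = app W (hWV.trans hVU) (F.res hWV s)

/-- The Hom-presheaf `U ↦ {presheaf morphisms F|_U → G|_U}`. -/
def homPsh (F G : Psh B) : Psh B where
  obj U := Hom F G U
  res {U V} h φ :=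
    { app := fun W hW => φ.app W (hW.trans h)
      natural := fun hVU hWV s => φ.natural _ hWV s }
  res_id := fun U φ => rfl
  res_comp := fun _ _ _ => rfl

/-- Objectwise binary product of presheaves. -/
def prodObj (F G : Psh B) : Psh B where
  obj U := F.obj U × G.obj U
  res h x := (F.res h x.1, G.res h x.2)
  res_id U x := by (try dsimp only); rw [F.res_id, G.res_id]
  res_comp h1 h2 x := by dsimp only; rw [F.res_comp, G.res_comp]

/-- Objectwise binary coproduct of presheaves. -/
def sumObj (F G : Psh B) : Psh B where
  obj U := F.obj U ⊕ G.obj U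
  res h x := x.elim (fun a => Sum.inl (F.res h a)) (fun c => Sum.inr (G.res h c))
  res_id U x := by
    cases x with
    | inl a => simp only [Sum.elim_inl]; rw [F.res_id]
    | inr c => simp only [Sum.elim_inr]; rw [G.res_id]
  res_comp h1 h2 x := by
    cases x with
    | inl a => simp only [Sum.elim_inl]; rw [F.res_comp]
    | inr c => simp only [Sum.elim_inr]; rw [G.res_comp]

/-- Objectwise product of a family of presheaves. -/
def piObj {ι : Type} (F : ι → Psh B) : Psh B where
  obj U := ∀ i, (F i).obj U
  res h x i := (F i).res h (x i)
  res_id U x := by funext i; exact (F i).res_id U (x i)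
  res_comp h1 h2 x := by funext i; exact (F i).res_comp h1 h2 (x i)

/-- Objectwise coproduct (disjoint union) of a family of presheaves. -/
def sigmaObj {ι : Type} (F : ι → Psh B) : Psh B where
  obj U := Σ i, (F i).obj U
  res h x := ⟨x.1, (F x.1).res h x.2⟩
  res_id U x := by
    rcases x with ⟨i, s⟩
    exact congrArg (Sigma.mk i) ((F i).res_id U s)
  res_comp h1 h2 x := by
    rcases x with ⟨i, s⟩
    exact congrArg (Sigma.mk i) ((F i).res_comp h1 h2 s)

/-- The characteristic presheaf of an open set: a one-element type on opens
contained in `W`, the empty type elsewhere. -/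
def char (W : Opens B) : Psh B where
  obj U := PLift (U ≤ W)
  res h x := ⟨h.trans x.down⟩
  res_id U x := rfl
  res_comp _ _ _ := rfl

/-- An isomorphism of presheaves. -/
structure Iso (F G : Psh B) where
  hom : ∀ U, F.obj U ≃ G.obj U
  natural : ∀ {U V : Opens B} (h : V ≤ U) (s : F.obj U),
    G.res h (hom U s) = hom V (F.res h s)

end Psh

/-!
Take for `F n` the sheaf of locally constant integer-valued `k` with `|n * x - k x| < 1`.
Near any point the constant `round (n * x)` is a section, so all stalks are nonempty. But a
locally constant function is constant on a ball, and on a ball of radius `> 1 / n` the function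
`n * x` varies by more than `2`, so no single integer stays within `1` of it; every nonempty
open set contains such a ball for `n` large.
-/

namespace Psh

variable {B : Type} [TopologicalSpace B]

theorem isEmpty_obj_of_le (F : Psh B) {U V : Opens B} (hVU : V ≤ U) [IsEmpty (F.obj V)] :
    IsEmpty (F.obj U) :=
  Function.isEmpty (F.res hVU)

theorem isEmpty_piObj_obj {ι : Type} (F : ι → Psh B) {U : Opens B} (i : ι)
    [IsEmpty ((F i).obj U)] : IsEmpty ((piObj F).obj U) :=
  Function.isEmpty fun s => s i

theorem isEmpty_stalk (F : Psh B) {x : B} (h : ∀ U : Opens B, x ∈ U → IsEmpty (F.obj U)) :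
    IsEmpty (F.stalk x) := by
  refine ⟨fun g => ?_⟩
  obtain ⟨⟨⟨U, hx⟩, s⟩, -⟩ := Quot.exists_rep g
  exact (h U hx).false s

section LocConst

variable {α : Type}

/-- The sheaf of continuous sections of the subspace `{(x, a) | P x a}` of `B × α`,
`α` discrete. -/
def locConst (P : B → α → Prop) : Psh B where
  obj U := {f : U → α // IsLocallyConstant f ∧ ∀ x : U, P x (f x)}
  res h f := ⟨f.1 ∘ Set.inclusion h, f.2.1.comp_continuous (continuous_inclusion h),
    fun x => f.2.2 (Set.inclusion h x)⟩
  res_id _ _ := rfl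
  res_comp _ _ _ := rfl

variable {P : B → α → Prop}

theorem isSheaf_locConst : (locConst P).IsSheaf := by
  intro ι U V hV hcov
  refine ⟨fun s t hst => Subtype.ext <| funext fun x => ?_, fun sf hsf => ?_⟩
  · obtain ⟨i, hi⟩ := hcov x x.2
    exact congrFun (congrArg Subtype.val (hst i)) ⟨x, hi⟩
  have agree : ∀ (x : B) (i j : ι) (hi : x ∈ V i) (hj : x ∈ V j),
      (sf i).1 ⟨x, hi⟩ = (sf j).1 ⟨x, hj⟩ := fun x i j hi hj =>
    congrFun (congrArg Subtype.val (hsf i j)) ⟨x, hi, hj⟩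
  choose idx hidx using fun x : U => hcov x x.2
  let g : U → α := fun x => (sf (idx x)).1 ⟨x, hidx x⟩
  have hg : ∀ (x : U) (i : ι) (hi : (x : B) ∈ V i), g x = (sf i).1 ⟨x, hi⟩ :=
    fun x i hi => agree x _ i _ hi
  refine ⟨⟨g, ?_, fun x => (sf (idx x)).2.2 ⟨x, hidx x⟩⟩,
    fun i => Subtype.ext <| funext fun y => hg _ i y.2⟩
  rw [IsLocallyConstant.iff_eventually_eq]
  intro x
  have hconst := (sf (idx x)).2.1.eventually_eq ⟨x, hidx x⟩
  rw [nhds_subtype_eq_comap, Filter.eventually_comap] at hconst ⊢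
  filter_upwards [hconst, (V (idx x)).isOpen.mem_nhds (hidx x)] with b hb hbV y hyb
  subst hyb
  rw [hg y _ hbV, hg x _ (hidx x)]
  exact hb ⟨y, hbV⟩ rfl

theorem nonempty_stalk_locConst {x : B} {a : α} (ha : IsOpen {y | P y a}) (hx : P x a) :
    Nonempty ((locConst P).stalk x) :=
  ⟨(locConst P).germ (U := ⟨_, ha⟩) hx ⟨fun _ => a, IsLocallyConstant.const a, fun y => y.2⟩⟩

theorem isEmpty_obj_locConst {U : Opens B} (hU : IsPreconnected (U : Set B))
    (hne : (U : Set B).Nonempty) (h : ∀ a, ∃ y ∈ U, ¬P y a) : IsEmpty ((locConst P).obj U) := by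
  refine ⟨fun ⟨f, hf, hfP⟩ => ?_⟩
  have : PreconnectedSpace U := Subtype.preconnectedSpace hU
  obtain ⟨x, hx⟩ := hne
  obtain ⟨y, hy, hPy⟩ := h (f ⟨x, hx⟩)
  exact hPy (hf.apply_eq_of_preconnectedSpace ⟨y, hy⟩ ⟨x, hx⟩ ▸ hfP ⟨y, hy⟩)

end LocConst

def intApprox (φ : B → ℝ) : Psh B :=
  locConst fun x (k : ℤ) => |φ x - k| < 1

theorem nonempty_stalk_intApprox {φ : B → ℝ} (hφ : Continuous φ) (x : B) :
    Nonempty ((intApprox φ).stalk x) :=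
  nonempty_stalk_locConst (a := (round (φ x) : ℤ)) (isOpen_lt (by fun_prop) continuous_const)
    ((abs_sub_round _).trans_lt (by norm_num))

theorem isEmpty_obj_intApprox {φ : B → ℝ} {U : Opens B} (hU : IsPreconnected (U : Set B))
    {y z : B} (hy : y ∈ U) (hz : z ∈ U) (hyz : 2 ≤ |φ y - φ z|) :
    IsEmpty ((intApprox φ).obj U) := by
  refine isEmpty_obj_locConst hU ⟨y, hy⟩ fun k => ?_
  by_contra! hk
  have := abs_sub_le (φ y) k (φ z)
  rw [abs_sub_comm (k : ℝ)] at this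
  linarith [hk y hy, hk z hz]

end Psh

open Psh

theorem exists_isEmpty_obj_intApprox_natCast_mul (U : Opens ℝ) (hU : (U : Set ℝ).Nonempty) :
    ∃ n : ℕ, IsEmpty ((intApprox fun x : ℝ => n * x).obj U) := by
  obtain ⟨x, hx⟩ := hU
  obtain ⟨ε, hε, hball⟩ := Metric.isOpen_iff.1 U.2 x hx
  obtain ⟨n, hn⟩ := exists_nat_gt (1 / ε)
  have hn0 : (0 : ℝ) < n := (one_div_pos.2 hε).trans hn
  have hnε : 1 / (n : ℝ) < ε := by rwa [div_lt_iff₀ hn0, mul_comm, ← div_lt_iff₀ hε]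
  have hmem : ∀ δ : ℝ, |δ| = 1 / n → x + δ ∈ Metric.ball x ε := fun δ hδ => by
    rwa [Metric.mem_ball, dist_eq_norm, add_sub_cancel_left, Real.norm_eq_abs, hδ]
  let V : Opens ℝ := ⟨Metric.ball x ε, Metric.isOpen_ball⟩
  have : IsEmpty ((intApprox fun x : ℝ => n * x).obj V) :=
    isEmpty_obj_intApprox (convex_ball x ε).isPreconnected
      (hmem (1 / n) (abs_of_pos (by positivity))) (hmem (-(1 / n)) (by simp))
      (by field_simp; norm_num)
  exact ⟨n, isEmpty_obj_of_le _ (show V ≤ U from hball)⟩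

/-- There is a sequence of sheaves on ℝ with all stalks nonempty whose objectwise
product presheaf has empty sections over every nonempty open set and empty stalks. -/
theorem stmt_8 :
    ∃ F : ℕ → Psh ℝ,
      (∀ n, (F n).IsSheaf) ∧
      (∀ (n : ℕ) (x : ℝ), Nonempty ((F n).stalk x)) ∧
      (∀ U : Opens ℝ, (U : Set ℝ).Nonempty → ∃ n, IsEmpty ((F n).obj U)) ∧
      (∀ U : Opens ℝ, (U : Set ℝ).Nonempty → IsEmpty ((Psh.piObj F).obj U)) ∧
      (∀ x : ℝ, IsEmpty ((Psh.piObj F).stalk x)) := by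
  let F : ℕ → Psh ℝ := fun n => intApprox fun x => n * x
  have hpi : ∀ U : Opens ℝ, (U : Set ℝ).Nonempty → IsEmpty ((piObj F).obj U) := fun U hU =>
    have ⟨n, hn⟩ := exists_isEmpty_obj_intApprox_natCast_mul U hU
    isEmpty_piObj_obj F n
  exact ⟨F, fun _ => isSheaf_locConst, fun _ => nonempty_stalk_intApprox (by fun_prop),
    exists_isEmpty_obj_intApprox_natCast_mul, hpi,
    fun x => isEmpty_stalk _ fun U hx => hpi U ⟨x, hx⟩⟩
end

section
/- Let (F_i)_{i ∈ I} be presheaves of types on a topological space B. Then Supp(∏_i F_i) ⊆ interior(⋂_i Supp F_i), where ∏_i F_i is the objectwise product presheaf U ↦ ∏_i F_i(U). Moreover, equality holds in each of the following cases: (a) B is Alexandrov-discrete (arbitrary intersections of open sets are open); (b) B is a zero-dimensional separable metrizable space and each F_i is a sheaf of types. -/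
open TopologicalSpace

/-
Sections of a product over `U` are tuples of sections, so the product has a section near `b`
exactly when all factors have sections on one common neighbourhood of `b`; this gives the
inclusion. For equality one must pass from sections `sᵢ` over neighbourhoods `Uᵢ` of `b` to a
common neighbourhood. If `B` is Alexandrov-discrete, `⋂ Uᵢ` is one. If `B` is second countable
with a clopen basis, every open cover has a refinement by pairwise disjoint clopen sets
(disjointify a countable clopen subcover); a sheaf with sections locally on an open `U` therefore
has a section on `U`, glued from sections on the disjoint pieces, which agree on the empty
overlaps. So every factor has a section on `interior (⋂ᵢ Supp Fᵢ)`.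
-/

open Set TopologicalSpace Function

theorem TopologicalSpace.IsTopologicalBasis.exists_pairwiseDisjoint_clopen_refinement
    {X : Type*} [TopologicalSpace X] [SecondCountableTopology X]
    (hB : IsTopologicalBasis {s : Set X | IsClopen s}) {κ : Type*} {V : κ → Set X}
    (hV : ∀ i, IsOpen (V i)) :
    ∃ 𝒟 : Set (Set X), 𝒟.PairwiseDisjoint id ∧ (∀ d ∈ 𝒟, IsClopen d ∧ ∃ i, d ⊆ V i) ∧
      ⋃₀ 𝒟 = ⋃ i, V i := by
  set 𝒞 := {c : Set X | IsClopen c ∧ ∃ i, c ⊆ V i}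
  have h𝒞 : ⋃₀ 𝒞 = ⋃ i, V i := by
    refine subset_antisymm (sUnion_subset fun c ⟨_, i, hi⟩ => hi.trans (subset_iUnion V i)) ?_
    refine iUnion_subset fun i x hx => ?_
    obtain ⟨c, hc, hxc, hcV⟩ := hB.exists_subset_of_mem_open hx (hV i)
    exact ⟨c, ⟨hc, i, hcV⟩, hxc⟩
  obtain ⟨𝒯, h𝒯c, h𝒯𝒞, h𝒯⟩ := isOpen_sUnion_countable 𝒞 fun c hc => hc.1.isOpen
  rcases 𝒯.eq_empty_or_nonempty with rfl | hne
  · exact ⟨∅, pairwiseDisjoint_empty, fun _ h => h.elim, by rw [← h𝒞, ← h𝒯]⟩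
  obtain ⟨f, rfl⟩ := h𝒯c.exists_eq_range hne
  refine ⟨range (disjointed f), (disjoint_disjointed f).range_pairwise, ?_, ?_⟩
  · rintro _ ⟨n, rfl⟩
    obtain ⟨hfn, i, hi⟩ := h𝒯𝒞 (mem_range_self n)
    exact ⟨disjointedRec (fun _ k ht => ht.diff (h𝒯𝒞 (mem_range_self k)).1) hfn,
      i, (disjointed_subset f n).trans hi⟩
  · rw [sUnion_range, iUnion_disjointed, ← sUnion_range, h𝒯, h𝒞]

namespace Psh

variable {B : Type} [TopologicalSpace B]

theorem IsSheaf.subsingleton_of_eq_bot {G : Psh B} (hG : G.IsSheaf) {W : Opens B}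
    (hW : W = ⊥) : Subsingleton (G.obj W) := by
  subst hW
  exact ⟨fun s t => (hG ⊥ (fun _ : Empty => ⊥) (fun _ => le_rfl) fun _ hx => hx.elim).1 s t
    fun e => e.elim⟩

theorem IsSheaf.nonempty_of_pairwise_disjoint {G : Psh B} (hG : G.IsSheaf) {κ : Type}
    {U : Opens B} (D : κ → Opens B) (hDU : ∀ j, D j ≤ U) (hcov : ∀ x ∈ U, ∃ j, x ∈ D j)
    (hdisj : Pairwise (Disjoint on D)) (hne : ∀ j, Nonempty (G.obj (D j))) :
    Nonempty (G.obj U) := by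
  obtain ⟨s, -⟩ := (hG U D hDU hcov).2 (fun j => (hne j).some) fun j k => by
    rcases eq_or_ne j k with rfl | hjk
    · rfl
    · exact (IsSheaf.subsingleton_of_eq_bot hG (disjoint_iff.1 (hdisj hjk))).elim _ _
  exact ⟨s⟩

theorem IsSheaf.nonempty_of_subset_supp [SecondCountableTopology B]
    (hB : IsTopologicalBasis {s : Set B | IsClopen s}) {G : Psh B} (hG : G.IsSheaf)
    (U : Opens B) (hU : (U : Set B) ⊆ G.supp) : Nonempty (G.obj U) := by
  obtain ⟨𝒟, hdisj, h𝒟, hcov⟩ := hB.exists_pairwiseDisjoint_clopen_refinement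
    (V := fun W : {W : Opens B // Nonempty (G.obj W)} => (W.1 : Set B) ∩ U)
    fun W => W.1.2.inter U.2
  have hUcov : ⋃ W : {W : Opens B // Nonempty (G.obj W)}, (W.1 : Set B) ∩ U = U := by
    refine subset_antisymm (iUnion_subset fun _ => inter_subset_right) fun x hx => ?_
    obtain ⟨W, hxW, hW⟩ := hU hx
    exact mem_iUnion.2 ⟨⟨W, hW⟩, hxW, hx⟩
  rw [hUcov] at hcov
  refine IsSheaf.nonempty_of_pairwise_disjoint hG (fun d : 𝒟 => ⟨d, (h𝒟 d d.2).1.isOpen⟩)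
    (fun d => (subset_sUnion_of_mem d.2).trans hcov.subset) (fun x hx => ?_)
    (fun d e hde => Opens.coe_disjoint.1 (hdisj d.2 e.2 (Subtype.coe_ne_coe.2 hde))) fun d => ?_
  · obtain ⟨d, hd, hxd⟩ := hcov.superset hx
    exact ⟨⟨d, hd⟩, hxd⟩
  · obtain ⟨-, W, hW⟩ := h𝒟 d d.2
    exact ⟨G.res (fun x hx => (hW hx).1) W.2.some⟩

variable {ι : Type} (F : ι → Psh B)

theorem supp_piObj_subset : (piObj F).supp ⊆ interior (⋂ i, (F i).supp) :=
  fun _ ⟨U, hbU, ⟨s⟩⟩ => mem_interior.2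
    ⟨U, fun _ hy => mem_iInter.2 fun i => ⟨U, hy, ⟨s i⟩⟩, U.2, hbU⟩

theorem supp_piObj_of_alexandrovDiscrete [AlexandrovDiscrete B] :
    (piObj F).supp = interior (⋂ i, (F i).supp) := by
  refine (supp_piObj_subset F).antisymm fun b hb => ?_
  choose U hbU hne using mem_iInter.1 (interior_subset hb)
  exact ⟨⟨⋂ i, U i, isOpen_iInter fun i => (U i).2⟩, mem_iInter.2 hbU,
    ⟨fun i => (F i).res (iInter_subset (fun i => (U i : Set B)) i) (hne i).some⟩⟩

theorem supp_piObj_of_isSheaf [SecondCountableTopology B]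
    (hB : IsTopologicalBasis {s : Set B | IsClopen s}) (hF : ∀ i, (F i).IsSheaf) :
    (piObj F).supp = interior (⋂ i, (F i).supp) := by
  refine (supp_piObj_subset F).antisymm fun b hb => ⟨⟨_, isOpen_interior⟩, hb, ?_⟩
  exact ⟨fun i => (IsSheaf.nonempty_of_subset_supp hB (hF i) _
    fun _ hy => mem_iInter.1 (interior_subset hy) i).some⟩

end Psh

/-- The support of an objectwise product of presheaves is contained in the interior
of the intersection of the supports, with equality (a) over Alexandrov-discrete
spaces, and (b) over zero-dimensional separable metrizable spaces when each factor
is a sheaf. -/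
theorem stmt_10 {B : Type} [TopologicalSpace B] {ι : Type} (F : ι → Psh B) :
    Psh.supp (Psh.piObj F) ⊆ interior (⋂ i, (F i).supp) ∧
    (AlexandrovDiscrete B → Psh.supp (Psh.piObj F) = interior (⋂ i, (F i).supp)) ∧
    (MetrizableSpace B → SecondCountableTopology B →
      IsTopologicalBasis {s : Set B | IsClopen s} →
      (∀ i, (F i).IsSheaf) →
      Psh.supp (Psh.piObj F) = interior (⋂ i, (F i).supp)) :=
  ⟨Psh.supp_piObj_subset F, fun _ => Psh.supp_piObj_of_alexandrovDiscrete F,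
    fun _ _ hB hF => Psh.supp_piObj_of_isSheaf F hB hF⟩
end
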